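/- Let A be a commutative ring in which 3 is invertible (so 5/9 = 5·9⁻¹ makes sense), and let u, v, a₁ ∈ A satisfy (u² + u + 1)(v² + v + 1) = 5/9. Set a₃ = u·a₁³, a₆ = (1 + u + u²)·v·a₁⁶, and c = a₁⁶ + a₁³·a₃ + a₃². Then a₆² + a₆·c + c² = (5/9)·a₁⁶·c; that is, f(a₆) = 0 where f is the defining relation of the ring of automorphic forms of discriminant 15. -/
import Mathlib


/-- Let `A` be a commutative ring in which 3 is invertible, and let
`u, v, a₁ ∈ A` satisfy `(u² + u + 1)(v² + v + 1) = 5/9` (where `5/9 = 5·9⁻¹`).  With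
`a₃ = u·a₁³`, `a₆ = (1 + u + u²)·v·a₁⁶`, and `c = a₁⁶ + a₁³·a₃ + a₃²`, the defining
relation of the ring of automorphic forms holds: `a₆² + a₆·c + c² = (5/9)·a₁⁶·c`. -/
theorem defining_relation_of_automorphic_forms (A : Type*) [CommRing A]
    (h3 : IsUnit (3 : A)) (u v a₁ : A)
    (huv : (u ^ 2 + u + 1) * (v ^ 2 + v + 1) = 5 * Ring.inverse (9 : A)) :
    (((1 + u + u ^ 2) * v * a₁ ^ 6) ^ 2 +
        ((1 + u + u ^ 2) * v * a₁ ^ 6) *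
          (a₁ ^ 6 + a₁ ^ 3 * (u * a₁ ^ 3) + (u * a₁ ^ 3) ^ 2) +
        (a₁ ^ 6 + a₁ ^ 3 * (u * a₁ ^ 3) + (u * a₁ ^ 3) ^ 2) ^ 2) =
      5 * Ring.inverse (9 : A) * a₁ ^ 6 *
        (a₁ ^ 6 + a₁ ^ 3 * (u * a₁ ^ 3) + (u * a₁ ^ 3) ^ 2) := by
  linear_combination (1 + u + u ^ 2) * a₁ ^ 12 * huv
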